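/- The proportional-share fairness notion is not globally monotone, even for additive valuations. Concretely, take 4 agents and 4 items e_1, …, e_4 with additive valuations v_1 = (25, 29, 23, 23), v_2 = (23, 29, 25, 23), v_3 = (23, 23, 25, 29), v_4 = (25, 23, 23, 29) (listing item values in order). Then there is no function f mapping each entitlement vector b (with all entries positive and summing to 1) to an allocation of the 4 items such that: (a) whenever some allocation is acceptable under Prop for b, f(b) is acceptable under Prop for b; and (b) whenever b i-improves b', agent i's value satisfies v_i(f(b)_i) ≥ v_i(f(b')_i). -/

import Mathlib

/-!
With every entitlement above 23%, each agent needs an item it values above 23, and for agent `i`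
these are exactly items `i` and `i + 1`; so the Prop allocations are one item per agent, either the
identity or the rotation `i ↦ i + 1`. Raising agent 1 to 26% (at the expense of agent 3) rules out
the rotation, and raising agent 2 to 26% (at the expense of agent 0) rules out the identity. The
uniform vector 3-improves the first and 0-improves the second, so a monotone rule must give agent 3
its identity item and agent 0 its rotation item (both worth 29) at the same time, which neither
allocation does.
-/

namespace Stmt10

/-- A partition of the items into (possibly empty) bundles. -/
def IsPartition {n m : ℕ} (A : Fin n → Finset (Fin m)) : Prop :=
  (∀ i j, i ≠ j → Disjoint (A i) (A j)) ∧ ∀ e, ∃ i, e ∈ A i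

/-- Additive value of a bundle. -/
def bval {m : ℕ} (w : Fin m → ℝ) (S : Finset (Fin m)) : ℝ := ∑ e ∈ S, w e

/-- The additive valuations of the four agents. -/
def v : Fin 4 → Fin 4 → ℝ :=
  ![![25, 29, 23, 23], ![23, 29, 25, 23], ![23, 23, 25, 29], ![25, 23, 23, 29]]

/-- An entitlement vector: positive entries summing to 1. -/
def Ent (β : Fin 4 → ℝ) : Prop := (∀ i, 0 < β i) ∧ ∑ i, β i = 1

/-- `β` i-improves `β'`. -/
def Improves (β β' : Fin 4 → ℝ) (i : Fin 4) : Prop :=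
  β' i < β i ∧ ∀ j, j ≠ i → β j ≤ β' j

/-- Acceptable under Prop for entitlement vector `β`. -/
def PropAcc (β : Fin 4 → ℝ) (A : Fin 4 → Finset (Fin 4)) : Prop :=
  IsPartition A ∧ ∀ i, β i * bval (v i) Finset.univ ≤ bval (v i) (A i)

lemma IsPartition.exists_injective_eq_singleton {n : ℕ} {A : Fin n → Finset (Fin n)}
    (hA : IsPartition A) (hne : ∀ i, (A i).Nonempty) :
    ∃ t : Fin n → Fin n, Function.Injective t ∧ ∀ i, A i = {t i} := by
  choose t ht using hne
  have hinj : Function.Injective t := fun i j hij => by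
    by_contra hij_ne
    exact Finset.disjoint_left.mp (hA.1 i j hij_ne) (ht i) (hij ▸ ht j)
  refine ⟨t, hinj, fun i => Finset.eq_singleton_iff_unique_mem.mpr ⟨ht i, fun e he => ?_⟩⟩
  obtain ⟨j, rfl⟩ := (Finite.injective_iff_surjective.mp hinj) e
  by_contra hji
  exact Finset.disjoint_left.mp (hA.1 i j fun hij => hji (hij ▸ rfl)) he (ht j)

lemma isPartition_singleton {n : ℕ} (σ : Equiv.Perm (Fin n)) : IsPartition fun i => {σ i} :=
  ⟨fun _ _ hij => Finset.disjoint_singleton.mpr (σ.injective.ne hij),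
    fun e => ⟨σ.symm e, by simp⟩⟩

open Fin.NatCast in
lemma Fin.eq_id_or_eq_add_one_of_injective {n : ℕ} [NeZero n] {t : Fin n → Fin n}
    (ht : Function.Injective t) (hstep : ∀ i, t i = i ∨ t i = i + 1) :
    t = id ∨ t = (· + 1) := by
  by_cases hfix : ∀ i, t i = i
  · exact Or.inl (funext hfix)
  push Not at hfix
  obtain ⟨k, hk⟩ := hfix
  have hshift : ∀ m : ℕ, t (k + m) = k + m + 1 := by
    intro m
    induction m with
    | zero => simpa using (hstep k).resolve_left hk
    | succ m ih =>
      rw [Nat.cast_succ, ← add_assoc]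
      rcases hstep (k + m + 1) with h | h
      · have hcollapse : k + m + 1 = k + m := ht (h.trans ih.symm)
        rw [h, hcollapse]
        exact hcollapse.symm
      · exact h
  refine Or.inr (funext fun i => ?_)
  simpa using hshift (i - k).val

def identityAlloc : Fin 4 → Finset (Fin 4) := fun i => {i}

def shiftAlloc : Fin 4 → Finset (Fin 4) := fun i => {i + 1}

lemma bval_univ (i : Fin 4) : bval (v i) Finset.univ = 100 := by
  fin_cases i <;> simp [bval, v, Fin.sum_univ_four] <;> norm_num

lemma bval_singleton {m : ℕ} (w : Fin m → ℝ) (e : Fin m) : bval w {e} = w e := by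
  simp [bval]

lemma lt_v_iff (i j : Fin 4) : 23 < v i j ↔ j = i ∨ j = i + 1 := by
  fin_cases i <;> fin_cases j <;> norm_num [v] <;> decide

lemma PropAcc.eq_identityAlloc_or_eq_shiftAlloc {β : Fin 4 → ℝ} {A : Fin 4 → Finset (Fin 4)}
    (hβ : ∀ i, 23 < β i * 100) (hA : PropAcc β A) : A = identityAlloc ∨ A = shiftAlloc := by
  have hshare : ∀ i, β i * 100 ≤ bval (v i) (A i) := fun i => bval_univ i ▸ hA.2 i
  have hne : ∀ i, (A i).Nonempty := fun i => by
    by_contra h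
    have := hshare i
    rw [Finset.not_nonempty_iff_eq_empty.mp h, bval, Finset.sum_empty] at this
    linarith [hβ i]
  obtain ⟨t, ht, hAt⟩ := hA.1.exists_injective_eq_singleton hne
  have hstep : ∀ i, t i = i ∨ t i = i + 1 := fun i =>
    (lt_v_iff i (t i)).mp ((hβ i).trans_le (by simpa [hAt, bval_singleton] using hshare i))
  rcases Fin.eq_id_or_eq_add_one_of_injective ht hstep with rfl | rfl
  · exact Or.inl (funext hAt)
  · exact Or.inr (funext hAt)

lemma propAcc_singleton_iff {β : Fin 4 → ℝ} (σ : Equiv.Perm (Fin 4)) :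
    PropAcc β (fun i => {σ i}) ↔ ∀ i, β i * 100 ≤ v i (σ i) := by
  simp only [PropAcc, bval_univ, bval_singleton, isPartition_singleton, true_and]

lemma propAcc_identityAlloc_iff {β : Fin 4 → ℝ} :
    PropAcc β identityAlloc ↔ ∀ i, β i * 100 ≤ v i i :=
  propAcc_singleton_iff (Equiv.refl _)

lemma propAcc_shiftAlloc_iff {β : Fin 4 → ℝ} :
    PropAcc β shiftAlloc ↔ ∀ i, β i * 100 ≤ v i (i + 1) :=
  propAcc_singleton_iff (Equiv.addRight 1)

noncomputable def uniformEnt : Fin 4 → ℝ := fun _ => 1 / 4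

noncomputable def raise1cut3 : Fin 4 → ℝ := ![1 / 4, 26 / 100, 1 / 4, 24 / 100]

noncomputable def raise2cut0 : Fin 4 → ℝ := ![24 / 100, 1 / 4, 26 / 100, 1 / 4]

lemma ent_uniformEnt : Ent uniformEnt :=
  ⟨fun _ => by norm_num [uniformEnt], by norm_num [uniformEnt]⟩

lemma ent_raise1cut3 : Ent raise1cut3 :=
  ⟨fun i => by fin_cases i <;> simp [raise1cut3], by simp [raise1cut3, Fin.sum_univ_four]; norm_num⟩

lemma ent_raise2cut0 : Ent raise2cut0 :=
  ⟨fun i => by fin_cases i <;> simp [raise2cut0], by simp [raise2cut0, Fin.sum_univ_four]; norm_num⟩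

lemma improves_uniformEnt_raise1cut3 : Improves uniformEnt raise1cut3 3 :=
  ⟨by simp [uniformEnt, raise1cut3]; norm_num,
    fun j hj => by (fin_cases j <;> simp_all [uniformEnt, raise1cut3]); norm_num⟩

lemma improves_uniformEnt_raise2cut0 : Improves uniformEnt raise2cut0 0 :=
  ⟨by simp [uniformEnt, raise2cut0]; norm_num,
    fun j hj => by (fin_cases j <;> simp_all [uniformEnt, raise2cut0]); norm_num⟩

lemma propAcc_uniformEnt_identityAlloc : PropAcc uniformEnt identityAlloc :=
  propAcc_identityAlloc_iff.mpr fun i => by fin_cases i <;> simp [uniformEnt, v] <;> norm_num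

lemma propAcc_raise1cut3_iff {A : Fin 4 → Finset (Fin 4)} :
    PropAcc raise1cut3 A ↔ A = identityAlloc := by
  refine ⟨fun hA => ?_, ?_⟩
  · refine (hA.eq_identityAlloc_or_eq_shiftAlloc fun i => ?_).resolve_right ?_
    · fin_cases i <;> simp [raise1cut3] <;> norm_num
    · rintro rfl
      have := propAcc_shiftAlloc_iff.mp hA 1
      simp [raise1cut3, v] at this
      norm_num at this
  · rintro rfl
    exact propAcc_identityAlloc_iff.mpr fun i => by fin_cases i <;> simp [raise1cut3, v] <;> norm_num

lemma propAcc_raise2cut0_iff {A : Fin 4 → Finset (Fin 4)} :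
    PropAcc raise2cut0 A ↔ A = shiftAlloc := by
  refine ⟨fun hA => ?_, ?_⟩
  · refine (hA.eq_identityAlloc_or_eq_shiftAlloc fun i => ?_).resolve_left ?_
    · fin_cases i <;> simp [raise2cut0] <;> norm_num
    · rintro rfl
      have := propAcc_identityAlloc_iff.mp hA 2
      simp [raise2cut0, v] at this
      norm_num at this
  · rintro rfl
    exact propAcc_shiftAlloc_iff.mpr fun i => by fin_cases i <;> simp [raise2cut0, v] <;> norm_num

theorem stmt_10 :
    ¬ ∃ f : (Fin 4 → ℝ) → (Fin 4 → Finset (Fin 4)),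
      (∀ β, Ent β → IsPartition (f β)) ∧
      (∀ β, Ent β → (∃ A, PropAcc β A) → PropAcc β (f β)) ∧
      (∀ β β' i, Ent β → Ent β' → Improves β β' i →
        bval (v i) (f β' i) ≤ bval (v i) (f β i)) := by
  rintro ⟨f, -, hacc, hmono⟩
  have h13 : f raise1cut3 = identityAlloc := propAcc_raise1cut3_iff.mp <|
    hacc _ ent_raise1cut3 ⟨_, propAcc_raise1cut3_iff.mpr rfl⟩
  have h20 : f raise2cut0 = shiftAlloc := propAcc_raise2cut0_iff.mp <|
    hacc _ ent_raise2cut0 ⟨_, propAcc_raise2cut0_iff.mpr rfl⟩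
  have hagent3 := hmono _ _ 3 ent_uniformEnt ent_raise1cut3 improves_uniformEnt_raise1cut3
  have hagent0 := hmono _ _ 0 ent_uniformEnt ent_raise2cut0 improves_uniformEnt_raise2cut0
  have hunif := hacc _ ent_uniformEnt ⟨_, propAcc_uniformEnt_identityAlloc⟩
  rcases hunif.eq_identityAlloc_or_eq_shiftAlloc (fun _ => by norm_num [uniformEnt]) with h | h
  · simp [h, h20, identityAlloc, shiftAlloc, bval_singleton, v] at hagent0
    norm_num at hagent0
  · simp [h, h13, identityAlloc, shiftAlloc, bval_singleton, v] at hagent3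
    norm_num at hagent3

end Stmt10
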